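/- If k ≥ 3 is an integer, ω = π − π/k, and P is a regular k-gon inscribed in a circle C, then for every point x on C there exists a wedge of angle ω with apex x containing P with both arms tangent to P; i.e., the ω-cloud of P covers all of C. -/

import Mathlib

open EuclideanGeometry Real Set
open scoped Classical

noncomputable section

abbrev Plane := EuclideanSpace ℝ (Fin 2)

/-- The unit vector in direction `θ`. -/
def unitVec (θ : ℝ) : Plane := (WithLp.equiv 2 (Fin 2 → ℝ)).symm ![Real.cos θ, Real.sin θ]

/-- The closed ray from `x` in direction `d`. -/
def ray (x d : Plane) : Set Plane := {y | ∃ t : ℝ, 0 ≤ t ∧ y = x + t • d}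

/-- The closed wedge with apex `x` bounded by the rays in directions `d₁` and `d₂`. -/
def wedgeSet (x d₁ d₂ : Plane) : Set Plane :=
  {y | ∃ s t : ℝ, 0 ≤ s ∧ 0 ≤ t ∧ y = x + s • d₁ + t • d₂}

/-- The wedge with apex `x`, arm directions `d₁`, `d₂` (unit vectors at angle `ω`),
is a minimal `ω`-wedge for `P`: it contains `P` and both arms touch `P`. -/
def IsMinWedge (P : Set Plane) (ω : ℝ) (x d₁ d₂ : Plane) : Prop :=
  ‖d₁‖ = 1 ∧ ‖d₂‖ = 1 ∧ InnerProductGeometry.angle d₁ d₂ = ω ∧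
  P ⊆ wedgeSet x d₁ d₂ ∧ (P ∩ ray x d₁).Nonempty ∧ (P ∩ ray x d₂).Nonempty

/-- The `ω`-cloud of `P`: the locus of apices of all minimal `ω`-wedges. -/
def omegaCloud (P : Set Plane) (ω : ℝ) : Set Plane := {x | ∃ d₁ d₂, IsMinWedge P ω x d₁ d₂}

/-- `V` is the vertex set of a convex polygon: at least 3 points, in strictly convex position. -/
def IsConvexPolygon (V : Finset Plane) : Prop :=
  3 ≤ V.card ∧ ∀ v ∈ V, v ∉ convexHull ℝ ((V.erase v : Finset Plane) : Set Plane)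

/-- The interior angle of a convex body `P` at a boundary point `v`, defined as the
supremum of angles `∠ a v b` over `a, b ∈ P \ {v}`. -/
def interiorAngle (P : Set Plane) (v : Plane) : ℝ :=
  sSup {θ : ℝ | ∃ a ∈ P, ∃ b ∈ P, a ≠ v ∧ b ≠ v ∧ θ = EuclideanGeometry.angle a v b}

/-- A circular arc, given by center, radius, starting angle and angular extent. -/
structure CircArc where
  center : Plane
  radius : ℝ
  start : ℝ
  delta : ℝ

/-- The (closed) point set of a circular arc. -/
def CircArc.points (A : CircArc) : Set Plane :=
  {p | ∃ θ ∈ Set.Icc A.start (A.start + A.delta), p = A.center + A.radius • unitVec θ}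

/-- The relative interior of a circular arc. -/
def CircArc.intPoints (A : CircArc) : Set Plane :=
  {p | ∃ θ ∈ Set.Ioo A.start (A.start + A.delta), p = A.center + A.radius • unitVec θ}

/-- The start point of an arc when it is traversed clockwise. -/
def CircArc.cwStart (A : CircArc) : Plane := A.center + A.radius • unitVec (A.start + A.delta)

/-- The end point of an arc when it is traversed clockwise. -/
def CircArc.cwEnd (A : CircArc) : Plane := A.center + A.radius • unitVec A.start

/-- The set of (bisector) directions of minimal `ω`-wedges of `P` with apex `x`. -/
def wedgeDirs (P : Set Plane) (ω : ℝ) (x : Plane) : Set Plane :=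
  {d | ∃ d₁ d₂, IsMinWedge P ω x d₁ d₂ ∧ d = (‖d₁ + d₂‖)⁻¹ • (d₁ + d₂)}

/-- On every interior point of the arc `A`, the minimal `ω`-wedge of `P` touches `P`
at `p` (with one arm) and `q` (with the other arm). -/
def ContactPair (P : Set Plane) (ω : ℝ) (A : CircArc) (p q : Plane) : Prop :=
  ∀ x ∈ A.intPoints, ∃ d₁ d₂, IsMinWedge P ω x d₁ d₂ ∧ p ∈ ray x d₁ ∧ q ∈ ray x d₂

/-!
Write `x = c + r • unitVec φ` and let `a ≤ φ < b = a + 2π/k` be the angles of the two vertices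
of the polygon adjacent to `x` on the circle. By the inscribed angle theorem, the wedge at `x`
whose arms pass through these two vertices has angle `π - (b - a)/2 = π - π/k`, and all other
vertices lie on the far arc `[b, a + 2π]`, hence inside the wedge. In coordinates: the chord from
`x` to `c + r • unitVec β` is `2r sin((β - φ)/2)` times a unit vector, and expanding that vector
in the basis of arm directions gives coefficients that are products of sines of half-angles,
all nonnegative for `β` on the far arc.
-/

lemma unitVec_apply_zero (θ : ℝ) : unitVec θ 0 = cos θ := rfl

lemma unitVec_apply_one (θ : ℝ) : unitVec θ 1 = sin θ := rfl

lemma norm_unitVec (θ : ℝ) : ‖unitVec θ‖ = 1 := by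
  rw [EuclideanSpace.norm_eq, Fin.sum_univ_two, unitVec_apply_zero, unitVec_apply_one,
    Real.norm_eq_abs, Real.norm_eq_abs, sq_abs, sq_abs, cos_sq_add_sin_sq, sqrt_one]

lemma angle_unitVec_unitVec (α β : ℝ) :
    InnerProductGeometry.angle (unitVec α) (unitVec β) = arccos (cos (α - β)) := by
  rw [InnerProductGeometry.angle, norm_unitVec, norm_unitVec, mul_one, div_one, cos_sub]
  simp only [PiLp.inner_apply, Fin.sum_univ_two, unitVec_apply_zero, unitVec_apply_one,
    RCLike.inner_apply, conj_trivial]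
  ring_nf

lemma unitVec_add_int_mul_two_pi (θ : ℝ) (n : ℤ) : unitVec (θ + n * (2 * π)) = unitVec θ := by
  rw [unitVec, unitVec, cos_add_int_mul_two_pi, sin_add_int_mul_two_pi]

lemma unitVec_add_two_pi (θ : ℝ) : unitVec (θ + 2 * π) = unitVec θ := by
  simpa using unitVec_add_int_mul_two_pi θ 1

lemma exists_eq_norm_smul_unitVec (v : Plane) : ∃ φ, v = ‖v‖ • unitVec φ := by
  set z : ℂ := ⟨v 0, v 1⟩
  have hz : ‖z‖ = ‖v‖ := by
    rw [EuclideanSpace.norm_eq, Fin.sum_univ_two, Complex.norm_def, Complex.normSq_mk,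
      Real.norm_eq_abs, Real.norm_eq_abs, sq_abs, sq_abs, sq, sq]
  refine ⟨z.arg, ?_⟩
  ext i
  fin_cases i
  · exact (hz ▸ Complex.norm_mul_cos_arg z).symm
  · exact (hz ▸ Complex.norm_mul_sin_arg z).symm

lemma unitVec_sub_unitVec (α β : ℝ) :
    unitVec β - unitVec α = (2 * sin ((β - α) / 2)) • unitVec ((α + β) / 2 + π / 2) := by
  ext i
  fin_cases i
  · simp only [PiLp.sub_apply, PiLp.smul_apply, smul_eq_mul, Fin.zero_eta]
    rw [unitVec_apply_zero, unitVec_apply_zero, unitVec_apply_zero, cos_add_pi_div_two,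
      cos_sub_cos]
    ring_nf
  · simp only [PiLp.sub_apply, PiLp.smul_apply, smul_eq_mul, Fin.mk_one]
    rw [unitVec_apply_one, unitVec_apply_one, unitVec_apply_one, sin_add_pi_div_two,
      sin_sub_sin]
    ring_nf

lemma sin_sub_smul_unitVec (α β θ : ℝ) :
    sin (β - α) • unitVec θ = sin (β - θ) • unitVec α + sin (θ - α) • unitVec β := by
  ext i
  fin_cases i <;>
  · simp only [PiLp.add_apply, PiLp.smul_apply, smul_eq_mul, Fin.zero_eta, Fin.mk_one,
      unitVec_apply_zero, unitVec_apply_one, sin_sub]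
    ring

lemma convex_wedgeSet (x d₁ d₂ : Plane) : Convex ℝ (wedgeSet x d₁ d₂) := by
  rintro p ⟨s₁, t₁, hs₁, ht₁, rfl⟩ q ⟨s₂, t₂, hs₂, ht₂, rfl⟩ a b ha hb hab
  refine ⟨a * s₁ + b * s₂, a * t₁ + b * t₂, by positivity, by positivity, ?_⟩
  rw [eq_sub_of_add_eq hab]
  module

lemma add_smul_unitVec_eq_add_smul_add_smul (c : Plane) (r a b φ β : ℝ)
    (hab : sin ((b - a) / 2) ≠ 0) :
    c + r • unitVec β = c + r • unitVec φ
      + (2 * r * sin ((β - φ) / 2) * sin ((β - b) / 2) / sin ((b - a) / 2))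
          • unitVec ((a + φ) / 2 - π / 2)
      + (2 * r * sin ((β - φ) / 2) * sin ((β - a) / 2) / sin ((b - a) / 2))
          • unitVec ((b + φ) / 2 + π / 2) := by
  have hchord := unitVec_sub_unitVec φ β
  have hbasis : unitVec ((φ + β) / 2 + π / 2)
      = (sin ((β - b) / 2) / sin ((b - a) / 2)) • unitVec ((a + φ) / 2 - π / 2)
        + (sin ((β - a) / 2) / sin ((b - a) / 2)) • unitVec ((b + φ) / 2 + π / 2) := by
    have h := sin_sub_smul_unitVec ((a + φ) / 2 - π / 2) ((b + φ) / 2 + π / 2)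
      ((φ + β) / 2 + π / 2)
    rw [show (b + φ) / 2 + π / 2 - ((a + φ) / 2 - π / 2) = (b - a) / 2 + π by ring,
      show (b + φ) / 2 + π / 2 - ((φ + β) / 2 + π / 2) = -((β - b) / 2) by ring,
      show (φ + β) / 2 + π / 2 - ((a + φ) / 2 - π / 2) = (β - a) / 2 + π by ring,
      sin_add_pi, sin_add_pi, sin_neg] at h
    have h' : sin ((b - a) / 2) • unitVec ((φ + β) / 2 + π / 2)
        = sin ((β - b) / 2) • unitVec ((a + φ) / 2 - π / 2)
          + sin ((β - a) / 2) • unitVec ((b + φ) / 2 + π / 2) := by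
      linear_combination (norm := module) -h
    rw [← inv_smul_smul₀ hab (unitVec _), h', smul_add, smul_smul, smul_smul, inv_mul_eq_div,
      inv_mul_eq_div]
  calc c + r • unitVec β
      = c + r • unitVec φ + (r * (2 * sin ((β - φ) / 2))) • unitVec ((φ + β) / 2 + π / 2) := by
        rw [mul_smul, ← hchord]; module
    _ = _ := by rw [hbasis]; module

theorem isMinWedge_convexHull_of_subset_arc {S : Set Plane} {c : Plane} {r a b φ : ℝ}
    (hr : 0 ≤ r) (haφ : a ≤ φ) (hφb : φ ≤ b) (hab : a < b) (hba : b < a + 2 * π)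
    (hS : S ⊆ (fun β ↦ c + r • unitVec β) '' Icc b (a + 2 * π))
    (ha : c + r • unitVec a ∈ S) (hb : c + r • unitVec b ∈ S) :
    IsMinWedge (convexHull ℝ S) (π - (b - a) / 2) (c + r • unitVec φ)
      (unitVec ((a + φ) / 2 - π / 2)) (unitVec ((b + φ) / 2 + π / 2)) := by
  have hsin : 0 < sin ((b - a) / 2) := sin_pos_of_pos_of_lt_pi (by linarith) (by linarith)
  have hcoeff : ∀ β ∈ Icc b (a + 2 * π),
      0 ≤ 2 * r * sin ((β - φ) / 2) * sin ((β - b) / 2) / sin ((b - a) / 2) ∧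
      0 ≤ 2 * r * sin ((β - φ) / 2) * sin ((β - a) / 2) / sin ((b - a) / 2) := by
    rintro β ⟨hbβ, hβa⟩
    have hsφ : 0 ≤ sin ((β - φ) / 2) :=
      sin_nonneg_of_nonneg_of_le_pi (by linarith) (by linarith)
    have hsb : 0 ≤ sin ((β - b) / 2) := sin_nonneg_of_nonneg_of_le_pi (by linarith) (by linarith)
    have hsa : 0 ≤ sin ((β - a) / 2) := sin_nonneg_of_nonneg_of_le_pi (by linarith) (by linarith)
    constructor <;> positivity
  have hcoord := fun β ↦ add_smul_unitVec_eq_add_smul_add_smul c r a b φ β hsin.ne'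
  refine ⟨norm_unitVec _, norm_unitVec _, ?_, ?_, ?_, ?_⟩
  · rw [angle_unitVec_unitVec, show (a + φ) / 2 - π / 2 - ((b + φ) / 2 + π / 2)
      = -((b - a) / 2 + π) by ring, cos_neg, cos_add_pi, arccos_neg,
      arccos_cos (by linarith) (by linarith)]
  · refine convexHull_min ?_ (convex_wedgeSet _ _ _)
    rintro _ hp
    obtain ⟨β, hβ, rfl⟩ := hS hp
    exact ⟨_, _, (hcoeff β hβ).1, (hcoeff β hβ).2, hcoord β⟩
  · refine ⟨_, subset_convexHull ℝ S ha, _, (hcoeff (a + 2 * π) ⟨by linarith, le_rfl⟩).1, ?_⟩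
    have h := hcoord (a + 2 * π)
    rwa [show (a + 2 * π - a) / 2 = π by ring, sin_pi, mul_zero, zero_div, zero_smul, add_zero,
      unitVec_add_two_pi] at h
  · refine ⟨_, subset_convexHull ℝ S hb, _, (hcoeff b ⟨le_rfl, by linarith⟩).2, ?_⟩
    have h := hcoord b
    rwa [sub_self, zero_div, sin_zero, mul_zero, zero_div, zero_smul, add_zero] at h

lemma unitVec_add_two_pi_mul_div_of_modEq {k : ℕ} {i j : ℤ} (h : i ≡ j [ZMOD k]) (θ : ℝ) :
    unitVec (θ + 2 * π * i / k) = unitVec (θ + 2 * π * j / k) := by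
  rcases eq_or_ne k 0 with rfl | hk
  · simp
  obtain ⟨q, hq⟩ := h.dvd
  rw [← unitVec_add_int_mul_two_pi (θ + 2 * π * i / k) q, eq_add_of_sub_eq' hq]
  congr 1
  push_cast
  field_simp
  ring

section RegularPolygon

variable {k : ℕ} {c : Plane} {r θ₀ : ℝ} {V : Set Plane}

lemma mem_of_eq_regularPolygon (hk : k ≠ 0)
    (hV : V = {p | ∃ i : Fin k, p = c + r • unitVec (θ₀ + 2 * π * ((i : ℕ) : ℝ) / (k : ℝ))})
    (j : ℤ) : c + r • unitVec (θ₀ + 2 * π * j / k) ∈ V := by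
  have h₀ := Int.emod_nonneg j (Int.natCast_ne_zero.mpr hk)
  have h₁ := Int.emod_lt_of_pos j (by omega : (0 : ℤ) < k)
  rw [hV]
  refine ⟨⟨(j % k).toNat, by omega⟩, ?_⟩
  have hcast : (((j % k).toNat : ℕ) : ℝ) = ((j % k : ℤ) : ℝ) := by
    exact_mod_cast Int.toNat_of_nonneg h₀
  rw [Fin.val_mk, hcast, unitVec_add_two_pi_mul_div_of_modEq (Int.mod_modEq j k)]

lemma subset_arc_of_eq_regularPolygon
    (hV : V = {p | ∃ i : Fin k, p = c + r • unitVec (θ₀ + 2 * π * ((i : ℕ) : ℝ) / (k : ℝ))})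
    (n : ℤ) :
    V ⊆ (fun β ↦ c + r • unitVec β) ''
      Icc (θ₀ + 2 * π * (n + 1 : ℤ) / k) (θ₀ + 2 * π * n / k + 2 * π) := by
  rw [hV]
  rintro _ ⟨i, rfl⟩
  have hk : (0 : ℤ) < k := by have := i.pos; omega
  have hk' : (k : ℝ) ≠ 0 := by exact_mod_cast hk.ne'
  set m : ℤ := n + 1 + ((i : ℤ) - n - 1) % k
  have hm : m ≡ i [ZMOD k] := by
    simpa using ((Int.mod_modEq ((i : ℤ) - n - 1) k).add_left (n + 1))
  have h₀ := Int.emod_nonneg ((i : ℤ) - n - 1) hk.ne'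
  have h₁ := Int.emod_lt_of_pos ((i : ℤ) - n - 1) hk
  refine ⟨θ₀ + 2 * π * m / k, ⟨?_, ?_⟩, ?_⟩
  · gcongr
    exact_mod_cast (by omega : n + 1 ≤ m)
  · rw [show θ₀ + 2 * π * n / k + 2 * π = θ₀ + 2 * π * (n + k : ℤ) / k by
      push_cast; field_simp; ring]
    gcongr
    exact_mod_cast (by omega : m ≤ n + k)
  · beta_reduce
    rw [unitVec_add_two_pi_mul_div_of_modEq hm, Int.cast_natCast]

end RegularPolygon

/-- If `k ≥ 3`, `ω = π - π/k`, and `P` is a regular `k`-gon inscribed in a circle `C`, then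
every point of `C` is the apex of some minimal `ω`-wedge of `P`: the `ω`-cloud covers all
of `C`. -/
theorem stmt_14 (k : ℕ) (hk : 3 ≤ k) (c : Plane) (r : ℝ) (hr : 0 < r) (θ₀ : ℝ)
    (V : Finset Plane)
    (hVdef : (V : Set Plane) =
      {p | ∃ i : Fin k, p = c + r • unitVec (θ₀ + 2 * π * ((i : ℕ) : ℝ) / (k : ℝ))}) :
    ∀ x ∈ Metric.sphere c r,
      x ∈ omegaCloud (convexHull ℝ (V : Set Plane)) (π - π / (k : ℝ)) := by
  intro x hx
  have hk0 : (0 : ℝ) < k := by positivity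
  obtain ⟨φ, rfl⟩ : ∃ φ, x = c + r • unitVec φ := by
    obtain ⟨φ, hφ⟩ := exists_eq_norm_smul_unitVec (x - c)
    rw [← dist_eq_norm, Metric.mem_sphere.mp hx] at hφ
    exact ⟨φ, eq_add_of_sub_eq' hφ⟩
  have hstep : 2 * π / k < 2 * π := div_lt_self two_pi_pos (by exact_mod_cast (by omega : 1 < k))
  obtain ⟨hn₁, hn₂⟩ := sub_toIcoDiv_zsmul_mem_Ico (div_pos two_pi_pos hk0) 0 (φ - θ₀)
  set n := toIcoDiv (div_pos two_pi_pos hk0) 0 (φ - θ₀)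
  have hangle_n : 2 * π * (n : ℤ) / k = n • (2 * π / k) := by rw [zsmul_eq_mul]; ring
  have hangle_succ : 2 * π * (n + 1 : ℤ) / k = n • (2 * π / k) + 2 * π / k := by
    rw [zsmul_eq_mul]; push_cast; ring
  have hwedge := isMinWedge_convexHull_of_subset_arc (φ := φ) hr.le
    (by linarith) (by linarith) (by linarith) (by linarith)
    (subset_arc_of_eq_regularPolygon hVdef n) (mem_of_eq_regularPolygon (by omega) hVdef n)
    (mem_of_eq_regularPolygon (by omega) hVdef (n + 1))
  have hω : π - (θ₀ + 2 * π * (n + 1 : ℤ) / k - (θ₀ + 2 * π * n / k)) / 2 = π - π / k := by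
    push_cast; ring
  exact ⟨_, _, hω ▸ hwedge⟩
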